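/- arXiv:2311.16104 — 2 statements merged into one kernel-verified Lean document; each statement's English description precedes it below -/
import Mathlib

section
/- Let μ₁, ν₁ be probability measures on a measurable space X₁ with μ₁(A) ≤ exp(ε₁) · ν₁(A) for every measurable A ⊆ X₁, and let μ₂, ν₂ be probability measures on a measurable space X₂ with μ₂(A) ≤ exp(ε₂) · ν₂(A) for every measurable A ⊆ X₂ (ε₁, ε₂ ≥ 0). Then the product measures satisfy (μ₁ × μ₂)(S) ≤ exp(ε₁ + ε₂) · (ν₁ × ν₂)(S) for every measurable S ⊆ X₁ × X₂. This is the sequential composition theorem of differential privacy for two independent mechanisms. -/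
open MeasureTheory
open scoped ENNReal

namespace MeasureTheory.Measure

variable {α β : Type*} [MeasurableSpace α] [MeasurableSpace β]

theorem prod_le_smul_prod {μ₁ ν₁ : Measure α} {μ₂ ν₂ : Measure β} [SFinite ν₂] {c₁ c₂ : ℝ≥0∞}
    (h₁ : μ₁ ≤ c₁ • ν₁) (h₂ : μ₂ ≤ c₂ • ν₂) : μ₁.prod μ₂ ≤ (c₁ * c₂) • ν₁.prod ν₂ :=
  calc μ₁.prod μ₂ ≤ (c₁ • ν₁).prod (c₂ • ν₂) := prod_mono h₁ h₂
    _ = (c₁ * c₂) • ν₁.prod ν₂ := by rw [prod_smul_left, prod_smul_right, smul_smul]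

end MeasureTheory.Measure

theorem dp_sequential_composition_general {X₁ X₂ : Type*} [MeasurableSpace X₁] [MeasurableSpace X₂]
    (μ₁ ν₁ : Measure X₁) (μ₂ ν₂ : Measure X₂)
    [IsProbabilityMeasure ν₂]
    (ε₁ ε₂ : ℝ)
    (h₁ : ∀ A : Set X₁, MeasurableSet A → μ₁ A ≤ ENNReal.ofReal (Real.exp ε₁) * ν₁ A)
    (h₂ : ∀ A : Set X₂, MeasurableSet A → μ₂ A ≤ ENNReal.ofReal (Real.exp ε₂) * ν₂ A) :
    ∀ S : Set (X₁ × X₂), MeasurableSet S →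
      (μ₁.prod μ₂) S ≤ ENNReal.ofReal (Real.exp (ε₁ + ε₂)) * (ν₁.prod ν₂) S := by
  intro S _
  rw [Real.exp_add, ENNReal.ofReal_mul (Real.exp_nonneg _)]
  exact Measure.prod_le_smul_prod (Measure.le_iff.2 h₁) (Measure.le_iff.2 h₂) S

/-- Sequential composition of differential privacy for two independent mechanisms:
pointwise `e^ε`-domination of probability measures is preserved (with budgets adding)
under products. -/
theorem dp_sequential_composition {X₁ X₂ : Type*} [MeasurableSpace X₁] [MeasurableSpace X₂]
    (μ₁ ν₁ : Measure X₁) (μ₂ ν₂ : Measure X₂)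
    [IsProbabilityMeasure μ₁] [IsProbabilityMeasure ν₁]
    [IsProbabilityMeasure μ₂] [IsProbabilityMeasure ν₂]
    (ε₁ ε₂ : ℝ) (hε₁ : 0 ≤ ε₁) (hε₂ : 0 ≤ ε₂)
    (h₁ : ∀ A : Set X₁, MeasurableSet A → μ₁ A ≤ ENNReal.ofReal (Real.exp ε₁) * ν₁ A)
    (h₂ : ∀ A : Set X₂, MeasurableSet A → μ₂ A ≤ ENNReal.ofReal (Real.exp ε₂) * ν₂ A) :
    ∀ S : Set (X₁ × X₂), MeasurableSet S →
      (μ₁.prod μ₂) S ≤ ENNReal.ofReal (Real.exp (ε₁ + ε₂)) * (ν₁.prod ν₂) S :=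
  dp_sequential_composition_general μ₁ ν₁ μ₂ ν₂ ε₁ ε₂ h₁ h₂
end

section
/- Let ε ∈ (0, 1/2], m ≥ 1, and d ∈ [0, 1]. Let b₁, …, b_m be i.i.d. real random variables taking values in {0,1} with P(b_i = 1) = 1/2 + εd/4, and let L be a Laplace(0, 1/(εm)) random variable independent of the b_i. Define the estimator d̃ = (4/ε)·((1/m)·∑_{i=1}^m b_i − 1/2) + L. Then E[d̃] = d and Var(d̃) = 4/(mε²) − d²/m + 2/(m²ε²) ≤ 2(2m + 1)/(m²ε²). That is, Dwork's density estimator is an unbiased estimate of the density d of the sampled sub-stream with mean squared error at most 2(2m+1)/(m²ε²). -/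
open MeasureTheory ProbabilityTheory

/-- The density of the Laplace distribution with location `μ` and scale `b`. -/
noncomputable def laplacePdf (μ b x : ℝ) : ℝ :=
  (1 / (2 * b)) * Real.exp (-|x - μ| / b)

/-- The Laplace distribution with location `μ` and scale `b`, as a measure on ℝ. -/
noncomputable def laplaceMeasure (μ b : ℝ) : Measure ℝ :=
  volume.withDensity fun x => ENNReal.ofReal (laplacePdf μ b x)

/-!
The estimator is `(4/(εm)) S - 2/ε + L` with `S = ∑ bᵢ` a sum of `m` independent Bernoulli(p)
variables, `p = 1/2 + εd/4`, and `L` independent centred Laplace noise. Its mean is therefore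
`(4/(εm)) m p - 2/ε = d`, and by independence its variance is
`(4/(εm))² m p(1 - p) + Var L`, where `p(1 - p) = 1/4 - ε²d²/16` and `Var L = 2/(εm)²`: the
`n`-th absolute moment of Laplace(0, b) is the Gamma integral `n! bⁿ`.
-/

open Real Set
open scoped Nat ENNReal

lemma integrableOn_pow_mul_exp_neg_div_Ioi (n : ℕ) {b : ℝ} (hb : 0 < b) :
    IntegrableOn (fun t : ℝ => t ^ n * exp (-t / b)) (Ioi 0) := by
  refine (integrableOn_rpow_mul_exp_neg_mul_rpow (p := 1) (s := n) (b := b⁻¹)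
    (by linarith [n.cast_nonneg (α := ℝ)]) one_pos (inv_pos.2 hb)).congr_fun
    (fun t _ => ?_) measurableSet_Ioi
  simp only [rpow_one, rpow_natCast, neg_mul, mul_neg, div_eq_inv_mul]

lemma integral_pow_mul_exp_neg_div_Ioi (n : ℕ) {b : ℝ} (hb : 0 < b) :
    ∫ t in Ioi 0, t ^ n * exp (-t / b) = n ! * b ^ (n + 1) := by
  have h := Real.integral_rpow_mul_exp_neg_mul_Ioi (a := n + 1) (r := b⁻¹) (by positivity)
    (inv_pos.2 hb)
  rw [Real.Gamma_nat_eq_factorial, one_div, inv_inv, ← Nat.cast_succ, rpow_natCast] at h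
  rw [mul_comm, ← h]
  refine setIntegral_congr_fun measurableSet_Ioi fun t _ => ?_
  simp only [Nat.cast_succ, add_sub_cancel_right, rpow_natCast, div_eq_inv_mul, mul_neg]

lemma integrable_comp_abs_of_integrableOn_Ioi {E : Type*} [NormedAddCommGroup E] {f : ℝ → E} (hf : IntegrableOn f (Ioi 0)) :
    Integrable fun x => f |x| := by
  have hIoi : IntegrableOn (fun x => f |x|) (Ioi 0) :=
    hf.congr_fun (fun x hx => by rw [abs_of_pos hx]) measurableSet_Ioi
  have hIic : IntegrableOn (fun x => f |x|) (Iic 0) := by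
    rw [← (Measure.measurePreserving_neg (volume : Measure ℝ)).integrableOn_comp_preimage
      (Homeomorph.neg ℝ).measurableEmbedding]
    simpa [Function.comp_def] using (integrableOn_Ici_iff_integrableOn_Ioi).2 hIoi
  rw [← integrableOn_univ, ← Iic_union_Ioi (a := (0 : ℝ)), integrableOn_union]
  exact ⟨hIic, hIoi⟩

section Laplace

variable {μ b : ℝ}

lemma measurable_laplacePdf (μ b : ℝ) : Measurable (laplacePdf μ b) := by
  unfold laplacePdf; fun_prop

lemma laplacePdf_nonneg (hb : 0 ≤ b) (x : ℝ) : 0 ≤ laplacePdf μ b x := by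
  unfold laplacePdf; positivity

lemma integrable_laplaceMeasure_iff (hb : 0 ≤ b) {g : ℝ → ℝ} :
    Integrable g (laplaceMeasure μ b) ↔ Integrable fun x => g x * laplacePdf μ b x := by
  rw [laplaceMeasure, integrable_withDensity_iff (measurable_laplacePdf μ b).ennreal_ofReal
    (.of_forall fun _ => ENNReal.ofReal_lt_top)]
  simp only [ENNReal.toReal_ofReal (laplacePdf_nonneg hb _)]

lemma integral_laplaceMeasure (hb : 0 ≤ b) (g : ℝ → ℝ) :
    ∫ x, g x ∂laplaceMeasure μ b = ∫ x, g x * laplacePdf μ b x := by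
  rw [laplaceMeasure, integral_withDensity_eq_integral_toReal_smul
    (measurable_laplacePdf μ b).ennreal_ofReal (.of_forall fun _ => ENNReal.ofReal_lt_top)]
  simp only [ENNReal.toReal_ofReal (laplacePdf_nonneg hb _), smul_eq_mul, mul_comm]

lemma abs_pow_mul_laplacePdf_zero (n : ℕ) (b x : ℝ) :
    |x| ^ n * laplacePdf 0 b x = (2 * b)⁻¹ * (|x| ^ n * exp (-|x| / b)) := by
  simp only [laplacePdf, sub_zero]; ring

lemma integrable_abs_pow_laplaceMeasure (n : ℕ) (hb : 0 < b) :
    Integrable (fun x => |x| ^ n) (laplaceMeasure 0 b) := by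
  rw [integrable_laplaceMeasure_iff hb.le]
  simp only [abs_pow_mul_laplacePdf_zero]
  exact (integrable_comp_abs_of_integrableOn_Ioi
    (integrableOn_pow_mul_exp_neg_div_Ioi n hb)).const_mul _

lemma integral_abs_pow_laplaceMeasure (n : ℕ) (hb : 0 < b) :
    ∫ x, |x| ^ n ∂laplaceMeasure 0 b = n ! * b ^ n := by
  rw [integral_laplaceMeasure hb.le]
  simp only [abs_pow_mul_laplacePdf_zero]
  rw [integral_const_mul, integral_comp_abs (f := fun t => t ^ n * exp (-t / b)),
    integral_pow_mul_exp_neg_div_Ioi n hb]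
  field_simp
  ring

lemma integral_id_laplaceMeasure_zero (hb : 0 ≤ b) : ∫ x, x ∂laplaceMeasure 0 b = 0 := by
  have h_odd : ∀ x, -x * laplacePdf 0 b (-x) = -(x * laplacePdf 0 b x) := fun x => by
    simp only [laplacePdf, sub_zero, abs_neg, neg_mul]
  have h := integral_neg_eq_self (fun x => x * laplacePdf 0 b x) volume
  simp only [h_odd, integral_neg] at h
  rw [integral_laplaceMeasure hb]
  linarith

lemma memLp_id_laplaceMeasure (hb : 0 < b) : MemLp id 2 (laplaceMeasure 0 b) :=
  (memLp_two_iff_integrable_sq aestronglyMeasurable_id).2 <| by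
    simpa only [sq_abs, id] using integrable_abs_pow_laplaceMeasure 2 hb

lemma variance_id_laplaceMeasure (hb : 0 < b) : Var[id; laplaceMeasure 0 b] = 2 * b ^ 2 := by
  rw [variance_of_integral_eq_zero aemeasurable_id (integral_id_laplaceMeasure_zero hb.le)]
  simpa [sq_abs] using integral_abs_pow_laplaceMeasure 2 hb

end Laplace

lemma ProbabilityTheory.HasLaw.memLp {Ω 𝓧 : Type*} {mΩ : MeasurableSpace Ω}
    {m𝓧 : MeasurableSpace 𝓧} {E : Type*} [NormedAddCommGroup E] {X : Ω → 𝓧} {μ : Measure 𝓧}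
    {P : Measure Ω} {f : 𝓧 → E} {p : ℝ≥0∞} (hX : HasLaw X μ P) (hf : MemLp f p μ) : MemLp (f ∘ X) p P := by
  rw [← hX.map_eq] at hf
  exact (memLp_map_measure_iff hf.aestronglyMeasurable hX.aemeasurable).1 hf

section ZeroOne

variable {Ω : Type*} {mΩ : MeasurableSpace Ω} {P : Measure Ω} {X : Ω → ℝ}

lemma memLp_of_forall_eq_zero_or_one [IsFiniteMeasure P] (hXm : AEStronglyMeasurable X P)
    (hX : ∀ ω, X ω = 0 ∨ X ω = 1) (q : ℝ≥0∞) : MemLp X q P :=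
  .of_bound hXm 1 <| .of_forall fun ω => by rcases hX ω with h | h <;> simp [h]

lemma eq_indicator_of_forall_eq_zero_or_one (hX : ∀ ω, X ω = 0 ∨ X ω = 1) :
    X = {ω | X ω = 1}.indicator 1 := by
  ext ω
  rcases hX ω with h | h <;> simp [h]

lemma integral_of_forall_eq_zero_or_one (hXm : Measurable X) (hX : ∀ ω, X ω = 0 ∨ X ω = 1) :
    P[X] = P.real {ω | X ω = 1} := by
  conv_lhs => rw [eq_indicator_of_forall_eq_zero_or_one hX]
  exact integral_indicator_one (hXm (measurableSet_singleton 1))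

lemma variance_of_forall_eq_zero_or_one [IsProbabilityMeasure P] (hXm : Measurable X)
    (hX : ∀ ω, X ω = 0 ∨ X ω = 1) :
    Var[X; P] = P.real {ω | X ω = 1} * (1 - P.real {ω | X ω = 1}) := by
  have hX_sq : X ^ 2 = X := funext fun ω => by rcases hX ω with h | h <;> simp [h]
  rw [variance_eq_sub (memLp_of_forall_eq_zero_or_one hXm.aestronglyMeasurable hX 2), hX_sq,
    integral_of_forall_eq_zero_or_one hXm hX]
  ring

lemma integral_sum_of_forall_eq_zero_or_one [IsFiniteMeasure P] {ι : Type*} [Fintype ι]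
    {X : ι → Ω → ℝ} {p : ℝ} (hXm : ∀ i, Measurable (X i)) (hX : ∀ i ω, X i ω = 0 ∨ X i ω = 1)
    (hp : ∀ i, P.real {ω | X i ω = 1} = p) :
    ∫ ω, ∑ i, X i ω ∂P = Fintype.card ι * p := by
  rw [integral_finsetSum _ fun i _ =>
    (memLp_of_forall_eq_zero_or_one (hXm i).aestronglyMeasurable (hX i) 1).integrable le_rfl]
  simp [integral_of_forall_eq_zero_or_one (hXm _) (hX _), hp]

lemma variance_sum_of_forall_eq_zero_or_one [IsProbabilityMeasure P] {ι : Type*} [Fintype ι]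
    {X : ι → Ω → ℝ} {p : ℝ} (hXm : ∀ i, Measurable (X i)) (hX : ∀ i ω, X i ω = 0 ∨ X i ω = 1)
    (hp : ∀ i, P.real {ω | X i ω = 1} = p) (hind : Pairwise fun i j => X i ⟂ᵢ[P] X j) :
    Var[fun ω => ∑ i, X i ω; P] = Fintype.card ι * (p * (1 - p)) := by
  rw [← Finset.sum_fn, IndepFun.variance_sum
    (fun i _ => memLp_of_forall_eq_zero_or_one (hXm i).aestronglyMeasurable (hX i) 2)
    (fun i _ j _ hij => hind hij)]
  simp [variance_of_forall_eq_zero_or_one (hXm _) (hX _), hp]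

end ZeroOne

lemma ProbabilityTheory.iIndepFun.indepFun_sum_option_elim {Ω ι β : Type*}
    {mΩ : MeasurableSpace Ω} {P : Measure Ω} [Fintype ι] {mβ : MeasurableSpace β}
    [AddCommMonoid β] [MeasurableAdd₂ β] {f : ι → Ω → β} {g : Ω → β}
    (h : iIndepFun (fun o : Option ι => o.elim g f) P) (hf : ∀ i, Measurable (f i))
    (hg : Measurable g) : (fun ω => ∑ i, f i ω) ⟂ᵢ[P] g := by
  have h_meas : ∀ o : Option ι, Measurable (o.elim g f) := by
    rintro (_ | i)
    exacts [hg, hf i]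
  simpa [Finset.sum_map, Finset.sum_fn] using
    h.indepFun_finsetSum_of_notMem h_meas (s := Finset.univ.map .some) (i := none) (by simp)

theorem dwork_density_estimator_moments_general {Ω : Type*} [MeasureSpace Ω]
    [IsProbabilityMeasure (ℙ : Measure Ω)] (ε : ℝ) (hε0 : 0 < ε)
    (m : ℕ) (hm : 1 ≤ m) (d : ℝ) (hd0 : 0 ≤ d)
    (B : Fin m → Ω → ℝ) (hBmeas : ∀ i, Measurable (B i))
    (hBval : ∀ i ω, B i ω = 0 ∨ B i ω = 1)
    (hB1 : ∀ i, ℙ {ω | B i ω = 1} = ENNReal.ofReal (1 / 2 + ε * d / 4))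
    (L : Ω → ℝ) (hLmeas : Measurable L)
    (hLlaw : Measure.map L ℙ = laplaceMeasure 0 (1 / (ε * m)))
    (hindep : iIndepFun
      (fun o : Option (Fin m) => o.elim L B) ℙ) :
    (∫ ω, (4 / ε) * ((1 / m) * ∑ i, B i ω - 1 / 2) + L ω ∂ℙ) = d ∧
    (∫ ω, ((4 / ε) * ((1 / m) * ∑ i, B i ω - 1 / 2) + L ω - d) ^ 2 ∂ℙ) =
      4 / (m * ε ^ 2) - d ^ 2 / m + 2 / ((m : ℝ) ^ 2 * ε ^ 2) ∧
    4 / (m * ε ^ 2) - d ^ 2 / m + 2 / ((m : ℝ) ^ 2 * ε ^ 2) ≤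
      2 * (2 * m + 1) / ((m : ℝ) ^ 2 * ε ^ 2) := by
  have hm0 : (0 : ℝ) < m := by exact_mod_cast hm
  have hBp : ∀ i, (ℙ : Measure Ω).real {ω | B i ω = 1} = 1 / 2 + ε * d / 4 := fun i => by
    rw [measureReal_def, hB1, ENNReal.toReal_ofReal (by positivity)]
  have hS : MemLp (fun ω => ∑ i, B i ω) 2 ℙ := memLp_finsetSum _ fun i _ =>
    memLp_of_forall_eq_zero_or_one (hBmeas i).aestronglyMeasurable (hBval i) 2
  have hL : HasLaw L (laplaceMeasure 0 (1 / (ε * m))) ℙ := ⟨hLmeas.aemeasurable, hLlaw⟩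
  have hL2 : MemLp L 2 ℙ := hL.memLp (memLp_id_laplaceMeasure (by positivity))
  have hA : MemLp (fun ω => (4 / ε) * ((1 / m) * ∑ i, B i ω - 1 / 2)) 2 ℙ :=
    ((hS.const_mul _).sub (memLp_const _)).const_mul _
  have hAL : (fun ω => (4 / ε) * ((1 / m) * ∑ i, B i ω - 1 / 2)) ⟂ᵢ[ℙ] L :=
    (hindep.indepFun_sum_option_elim hBmeas hLmeas).comp
      (by fun_prop : Measurable fun x : ℝ => (4 / ε) * ((1 / m) * x - 1 / 2)) measurable_id
  have hmean : (∫ ω, (4 / ε) * ((1 / m) * ∑ i, B i ω - 1 / 2) + L ω ∂ℙ) = d := by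
    rw [integral_add (hA.integrable one_le_two) (hL2.integrable one_le_two), integral_const_mul,
      integral_sub ((hS.integrable one_le_two).const_mul _) (integrable_const _),
      integral_const_mul, integral_sum_of_forall_eq_zero_or_one hBmeas hBval hBp,
      hL.integral_eq, integral_id_laplaceMeasure_zero (by positivity)]
    simp only [integral_const, probReal_univ, smul_eq_mul, one_mul, Fintype.card_fin]
    field_simp
    ring
  refine ⟨hmean, ?_, ?_⟩
  · conv_lhs => rw [← hmean]
    rw [← variance_eq_integral (by fun_prop),
      hAL.variance_fun_add hA hL2, variance_const_mul, variance_sub_const (by fun_prop),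
      variance_const_mul, variance_sum_of_forall_eq_zero_or_one hBmeas hBval hBp
        fun i j hij => (hindep.precomp (Option.some_injective _)).indepFun hij,
      hL.variance_eq, variance_id_laplaceMeasure (by positivity), Fintype.card_fin]
    field_simp
    ring
  · have h_sum : 4 / (m * ε ^ 2) + 2 / ((m : ℝ) ^ 2 * ε ^ 2) =
        2 * (2 * m + 1) / ((m : ℝ) ^ 2 * ε ^ 2) := by
      field_simp
      ring
    linarith [show 0 ≤ d ^ 2 / m by positivity]

/-- Dwork's pan-private density estimator
`d̃ = (4/ε)·((1/m)·∑ᵢ bᵢ − 1/2) + L`, with the `bᵢ` i.i.d. `Bernoulli(1/2 + εd/4)` and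
`L ~ Laplace(0, 1/(εm))` independent, is an unbiased estimate of `d` with variance
`4/(mε²) − d²/m + 2/(m²ε²) ≤ 2(2m+1)/(m²ε²)`. -/
theorem dwork_density_estimator_moments {Ω : Type*} [MeasureSpace Ω]
    [IsProbabilityMeasure (ℙ : Measure Ω)] (ε : ℝ) (hε0 : 0 < ε) (hε : ε ≤ 1 / 2)
    (m : ℕ) (hm : 1 ≤ m) (d : ℝ) (hd0 : 0 ≤ d) (hd1 : d ≤ 1)
    (B : Fin m → Ω → ℝ) (hBmeas : ∀ i, Measurable (B i))
    (hBval : ∀ i ω, B i ω = 0 ∨ B i ω = 1)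
    (hB1 : ∀ i, ℙ {ω | B i ω = 1} = ENNReal.ofReal (1 / 2 + ε * d / 4))
    (L : Ω → ℝ) (hLmeas : Measurable L)
    (hLlaw : Measure.map L ℙ = laplaceMeasure 0 (1 / (ε * m)))
    (hindep : iIndepFun
      (fun o : Option (Fin m) => o.elim L B) ℙ) :
    (∫ ω, (4 / ε) * ((1 / m) * ∑ i, B i ω - 1 / 2) + L ω ∂ℙ) = d ∧
    (∫ ω, ((4 / ε) * ((1 / m) * ∑ i, B i ω - 1 / 2) + L ω - d) ^ 2 ∂ℙ) =
      4 / (m * ε ^ 2) - d ^ 2 / m + 2 / ((m : ℝ) ^ 2 * ε ^ 2) ∧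
    4 / (m * ε ^ 2) - d ^ 2 / m + 2 / ((m : ℝ) ^ 2 * ε ^ 2) ≤
      2 * (2 * m + 1) / ((m : ℝ) ^ 2 * ε ^ 2) :=
  dwork_density_estimator_moments_general ε hε0 m hm d hd0 B hBmeas hBval hB1 L hLmeas hLlaw hindep
end
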